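/- Modal equivalence between pointed LHS models can be upgraded to bisimilarity via ultrapowers: if ⟨M,a,b⟩ and ⟨N,w,u⟩ satisfy the same LHS formulas, and U is an incomplete ultrafilter over ℕ, then ⟨∏_U M,(f_a)_U,(f_b)_U⟩ and ⟨∏_U N,(f_w)_U,(f_u)_U⟩ are LHS-bisimilar. -/

import Mathlib

inductive LHSForm : Type
  | pl : ℕ → LHSForm
  | pr : ℕ → LHSForm
  | I : LHSForm
  | neg : LHSForm → LHSForm
  | and : LHSForm → LHSForm → LHSForm
  | box : LHSForm → LHSForm
  | bbox : LHSForm → LHSForm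
  deriving DecidableEq

def LHSForm.or (φ ψ : LHSForm) : LHSForm := .neg (.and φ.neg ψ.neg)
def LHSForm.imp (φ ψ : LHSForm) : LHSForm := .neg (.and φ ψ.neg)
def LHSForm.iff (φ ψ : LHSForm) : LHSForm := .and (φ.imp ψ) (ψ.imp φ)
def LHSForm.dia (φ : LHSForm) : LHSForm := .neg (.box φ.neg)
def LHSForm.bdia (φ : LHSForm) : LHSForm := .neg (.bbox φ.neg)

structure LHSModel where
  W : Type
  R : W → W → Prop
  Vl : ℕ → W → Prop
  Vr : ℕ → W → Prop

def LHSModel.sat (M : LHSModel) : M.W → M.W → LHSForm → Prop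
  | s, _, .pl i => M.Vl i s
  | _, t, .pr i => M.Vr i t
  | s, t, .I => s = t
  | s, t, .neg φ => ¬ M.sat s t φ
  | s, t, .and φ ψ => M.sat s t φ ∧ M.sat s t ψ
  | s, t, .box φ => ∀ s', M.R s s' → M.sat s' t φ
  | s, t, .bbox φ => ∀ t', M.R t t' → M.sat s t' φ

/-- Z is an LHS-bisimulation between M and M'. -/
def IsBisim (M M' : LHSModel) (Z : M.W × M.W → M'.W × M'.W → Prop) : Prop :=
  ∀ s t s' t', Z (s, t) (s', t') →
    (∀ i, M.Vl i s ↔ M'.Vl i s') ∧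
    (∀ i, M.Vr i t ↔ M'.Vr i t') ∧
    (s = t ↔ s' = t') ∧
    (∀ v, M.R s v → ∃ v', M'.R s' v' ∧ Z (v, t) (v', t')) ∧
    (∀ v, M.R t v → ∃ v', M'.R t' v' ∧ Z (s, v) (s', v')) ∧
    (∀ v', M'.R s' v' → ∃ v, M.R s v ∧ Z (v, t) (v', t')) ∧
    (∀ v', M'.R t' v' → ∃ v, M.R t v ∧ Z (s, v) (s', v'))

/-- An ultrafilter is incomplete if it is not closed under countable intersections. -/
def Ultrafilter.Incomplete {ι : Type} (U : Ultrafilter ι) : Prop :=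
  ∃ s : ℕ → Set ι, (∀ n, s n ∈ U) ∧ (⋂ n, s n) ∉ U

def upSetoid (M : LHSModel) {ι : Type} (U : Ultrafilter ι) : Setoid (ι → M.W) where
  r f g := {i | f i = g i} ∈ U
  iseqv := by
    refine ⟨fun f => ?_, fun {f g} h => ?_, fun {f g h} h1 h2 => ?_⟩
    · have : {i | f i = f i} = Set.univ := by ext i; simp
      rw [this]; exact Filter.univ_mem
    · exact Filter.mem_of_superset h (fun i hi => (Set.mem_setOf_eq ▸ hi).symm)
    · exact Filter.mem_of_superset (Filter.inter_mem h1 h2)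
        (fun i hi => hi.1.trans hi.2)

/-- The ultrapower ∏_U M of an LHS model modulo an ultrafilter U. -/
def LHSModel.ultrapower (M : LHSModel) {ι : Type} (U : Ultrafilter ι) : LHSModel where
  W := Quotient (upSetoid M U)
  R a b := Quotient.liftOn₂ a b (fun f g => {i | M.R (f i) (g i)} ∈ U)
    (by
      intro f g f' g' hf hg
      have h1 : {i | f i = f' i} ∈ U := hf
      have h2 : {i | g i = g' i} ∈ U := hg
      apply propext
      constructor <;> intro h
      · refine Filter.mem_of_superset
          (Filter.inter_mem h (Filter.inter_mem h1 h2)) (fun i hi => ?_)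
        have h3 : M.R (f i) (g i) := hi.1
        have e1 : f i = f' i := hi.2.1
        have e2 : g i = g' i := hi.2.2
        show M.R (f' i) (g' i)
        rw [← e1, ← e2]; exact h3
      · refine Filter.mem_of_superset
          (Filter.inter_mem h (Filter.inter_mem h1 h2)) (fun i hi => ?_)
        have h3 : M.R (f' i) (g' i) := hi.1
        have e1 : f i = f' i := hi.2.1
        have e2 : g i = g' i := hi.2.2
        show M.R (f i) (g i)
        rw [e1, e2]; exact h3)
  Vl i a := Quotient.liftOn a (fun f => {j | M.Vl i (f j)} ∈ U)
    (by
      intro f f' hf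
      have h1 : {j | f j = f' j} ∈ U := hf
      apply propext
      constructor <;> intro h
      · refine Filter.mem_of_superset (Filter.inter_mem h h1) (fun j hj => ?_)
        have h3 : M.Vl i (f j) := hj.1
        have e : f j = f' j := hj.2
        show M.Vl i (f' j); rw [← e]; exact h3
      · refine Filter.mem_of_superset (Filter.inter_mem h h1) (fun j hj => ?_)
        have h3 : M.Vl i (f' j) := hj.1
        have e : f j = f' j := hj.2
        show M.Vl i (f j); rw [e]; exact h3)
  Vr i a := Quotient.liftOn a (fun f => {j | M.Vr i (f j)} ∈ U)
    (by
      intro f f' hf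
      have h1 : {j | f j = f' j} ∈ U := hf
      apply propext
      constructor <;> intro h
      · refine Filter.mem_of_superset (Filter.inter_mem h h1) (fun j hj => ?_)
        have h3 : M.Vr i (f j) := hj.1
        have e : f j = f' j := hj.2
        show M.Vr i (f' j); rw [← e]; exact h3
      · refine Filter.mem_of_superset (Filter.inter_mem h h1) (fun j hj => ?_)
        have h3 : M.Vr i (f' j) := hj.1
        have e : f j = f' j := hj.2
        show M.Vr i (f j); rw [e]; exact h3)

/-- The point of the ultrapower determined by the constant function with value w. -/
def LHSModel.constPt (M : LHSModel) {ι : Type} (U : Ultrafilter ι) (w : M.W) :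
    (M.ultrapower U).W :=
  Quotient.mk (upSetoid M U) (fun _ => w)

/-!
By Łoś's theorem the constant points of the two ultrapowers are still modally equivalent, so it
suffices that modal equivalence is a bisimulation between the ultrapowers. That is the
Hennessy–Milner argument, and it needs saturation: a set of formulas each finite part of which
holds at some successor must hold at a single successor. An incomplete ultrafilter gives a
decreasing sequence of large sets with empty intersection; intersecting it with the sets where
the first `n` formulas are jointly witnessed and choosing, at each index, a witness for the
deepest level the index still reaches yields a successor in the ultrapower that realizes all of
them.
-/

namespace LHSForm

def encode : LHSForm → ℕ
  | pl i => Nat.pair 0 i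
  | pr i => Nat.pair 1 i
  | I => Nat.pair 2 0
  | neg φ => Nat.pair 3 φ.encode
  | and φ ψ => Nat.pair 4 (Nat.pair φ.encode ψ.encode)
  | box φ => Nat.pair 5 φ.encode
  | bbox φ => Nat.pair 6 φ.encode

theorem encode_injective : Function.Injective encode := by
  intro φ ψ h
  induction φ generalizing ψ <;> cases ψ <;> simp only [encode, Nat.pair_eq_pair] at h <;> grind

instance : Countable LHSForm := encode_injective.countable

def top : LHSForm := .imp .I .I

def conj (L : List LHSForm) : LHSForm := L.foldr .and .top

end LHSForm

theorem Nat.exists_forall_of_antitone {α : Type*} [Nonempty α] {Q : ℕ → Prop} (hQ : Antitone Q)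
    {P : ℕ → α → Prop} (hP : ∀ n, Q n → ∃ x, ∀ k ≤ n, P k x) {N : ℕ} (hN : ¬ Q N) :
    ∃ x, ∀ n, Q n → P n x := by
  induction N with
  | zero => exact ⟨Classical.arbitrary α, fun n hn => absurd (hQ n.zero_le hn) hN⟩
  | succ N ih =>
    by_cases hQN : Q N
    · obtain ⟨x, hx⟩ := hP N hQN
      refine ⟨x, fun n hn => hx n ?_⟩
      by_contra! hlt
      exact hN (hQ hlt hn)
    · exact ih hQN

namespace Ultrafilter

variable {ι : Type} {U : Ultrafilter ι}

theorem Incomplete.exists_antitone_mem (hU : U.Incomplete) :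
    ∃ Y : ℕ → Set ι, Antitone Y ∧ (∀ n, Y n ∈ U) ∧ ∀ i, ∃ n, i ∉ Y n := by
  obtain ⟨S, hS, hSU⟩ := hU
  refine ⟨fun n => (⋂ k ∈ Set.Iic n, S k) \ ⋂ k, S k, ?_, fun n => ?_, fun i => ?_⟩
  · exact fun m n hmn => Set.sdiff_subset_sdiff_left
      (Set.biInter_subset_biInter_left (Set.Iic_subset_Iic.mpr hmn))
  · exact Filter.sdiff_mem ((Filter.biInter_mem (Set.finite_Iic n)).mpr fun k _ => hS k)
      (Ultrafilter.compl_mem_iff_notMem.mpr hSU)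
  · by_cases hi : i ∈ ⋂ k, S k
    · exact ⟨0, fun h => h.2 hi⟩
    · obtain ⟨n, hn⟩ := not_forall.mp (Set.mem_iInter.not.mp hi)
      exact ⟨n, fun h => hn (Set.mem_iInter₂.mp h.1 n (Set.mem_Iic.mpr le_rfl))⟩

theorem Incomplete.exists_forall_eventually {α : Type*} (hU : U.Incomplete)
    {P : ℕ → ι → α → Prop} (hP : ∀ n, ∀ᶠ i in U, ∃ x, ∀ k ≤ n, P k i x) :
    ∃ h : ι → α, ∀ n, ∀ᶠ i in U, P n i (h i) := by
  have : Nonempty α := let ⟨_, x, _⟩ := (hP 0).exists; ⟨x⟩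
  obtain ⟨Y, hYanti, hYU, hYempty⟩ := hU.exists_antitone_mem
  let Y' n := Y n ∩ {i | ∃ x, ∀ k ≤ n, P k i x}
  have hY'anti : Antitone Y' := fun m n hmn => Set.inter_subset_inter (hYanti hmn)
    fun i ⟨x, hx⟩ => ⟨x, fun k hk => hx k (hk.trans hmn)⟩
  have hpt : ∀ i, ∃ x, ∀ n, i ∈ Y' n → P n i x := fun i =>
    let ⟨_, hN⟩ := hYempty i
    Nat.exists_forall_of_antitone (fun _ _ hmn hi => hY'anti hmn hi) (fun _ hn => hn.2)
      (fun hN' => hN hN'.1)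
  choose h hh using hpt
  exact ⟨h, fun n => Filter.mem_of_superset (Filter.inter_mem (hYU n) (hP n)) (hh · n)⟩

end Ultrafilter

namespace LHSModel

section Semantics

variable (M : LHSModel) {s t : M.W}

@[simp]
theorem sat_top : M.sat s t .top := by
  simp [LHSForm.top, LHSForm.imp, sat]

@[simp]
theorem sat_conj {L : List LHSForm} : M.sat s t (.conj L) ↔ ∀ φ ∈ L, M.sat s t φ := by
  induction L <;> simp_all [LHSForm.conj, sat]

theorem sat_dia {φ : LHSForm} : M.sat s t φ.dia ↔ ∃ s', M.R s s' ∧ M.sat s' t φ := by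
  simp [LHSForm.dia, sat]

theorem sat_bdia {φ : LHSForm} : M.sat s t φ.bdia ↔ ∃ t', M.R t t' ∧ M.sat s t' φ := by
  simp [LHSForm.bdia, sat]

end Semantics

structure IsSaturated (M : LHSModel) : Prop where
  left (s t : M.W) (Γ : Set LHSForm) :
    (∀ Δ : Finset LHSForm, ↑Δ ⊆ Γ → ∃ s', M.R s s' ∧ ∀ φ ∈ Δ, M.sat s' t φ) →
      ∃ s', M.R s s' ∧ ∀ φ ∈ Γ, M.sat s' t φ
  right (s t : M.W) (Γ : Set LHSForm) :
    (∀ Δ : Finset LHSForm, ↑Δ ⊆ Γ → ∃ t', M.R t t' ∧ ∀ φ ∈ Δ, M.sat s t' φ) →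
      ∃ t', M.R t t' ∧ ∀ φ ∈ Γ, M.sat s t' φ

def ModalEquiv (M N : LHSModel) (p : M.W × M.W) (q : N.W × N.W) : Prop :=
  ∀ φ, M.sat p.1 p.2 φ ↔ N.sat q.1 q.2 φ

namespace ModalEquiv

variable {M N : LHSModel} {s t v : M.W} {s' t' : N.W}

theorem symm (h : ModalEquiv M N (s, t) (s', t')) : ModalEquiv N M (s', t') (s, t) :=
  fun φ => (h φ).symm

theorem of_forall_imp (h : ∀ φ, M.sat s t φ → N.sat s' t' φ) : ModalEquiv M N (s, t) (s', t') :=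
  fun φ => ⟨h φ, fun hN => by_contra fun hM => h φ.neg hM hN⟩

theorem forth_left (hN : N.IsSaturated) (h : ModalEquiv M N (s, t) (s', t')) (hv : M.R s v) :
    ∃ v', N.R s' v' ∧ ModalEquiv M N (v, t) (v', t') := by
  obtain ⟨v', hv', hΓ⟩ := hN.left s' t' {φ | M.sat v t φ} fun Δ hΔ => by
    have hdia : M.sat s t (LHSForm.conj Δ.toList).dia :=
      (sat_dia M).mpr ⟨v, hv, by simpa using fun φ hφ => hΔ hφ⟩
    obtain ⟨v', hv', hΔv'⟩ := (sat_dia N).mp ((h _).mp hdia)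
    exact ⟨v', hv', by simpa using hΔv'⟩
  exact ⟨v', hv', of_forall_imp hΓ⟩

theorem forth_right (hN : N.IsSaturated) (h : ModalEquiv M N (s, t) (s', t')) (hv : M.R t v) :
    ∃ v', N.R t' v' ∧ ModalEquiv M N (s, v) (s', v') := by
  obtain ⟨v', hv', hΓ⟩ := hN.right s' t' {φ | M.sat s v φ} fun Δ hΔ => by
    have hbdia : M.sat s t (LHSForm.conj Δ.toList).bdia :=
      (sat_bdia M).mpr ⟨v, hv, by simpa using fun φ hφ => hΔ hφ⟩
    obtain ⟨v', hv', hΔv'⟩ := (sat_bdia N).mp ((h _).mp hbdia)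
    exact ⟨v', hv', by simpa using hΔv'⟩
  exact ⟨v', hv', of_forall_imp hΓ⟩

end ModalEquiv

theorem isBisim_modalEquiv {M N : LHSModel} (hM : M.IsSaturated) (hN : N.IsSaturated) :
    IsBisim M N (ModalEquiv M N) := by
  intro s t s' t' h
  refine ⟨fun i => h (.pl i), fun i => h (.pr i), h .I, fun v hv => h.forth_left hN hv,
    fun v hv => h.forth_right hN hv, fun v' hv' => ?_, fun v' hv' => ?_⟩
  · obtain ⟨v, hv, hvv'⟩ := h.symm.forth_left hM hv'
    exact ⟨v, hv, hvv'.symm⟩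
  · obtain ⟨v, hv, hvv'⟩ := h.symm.forth_right hM hv'
    exact ⟨v, hv, hvv'.symm⟩

section Ultrapower

variable (M : LHSModel) {ι : Type} (U : Ultrafilter ι)

def ultrapowerMk (f : ι → M.W) : (M.ultrapower U).W := Quotient.mk (upSetoid M U) f

variable {M U}

theorem ultrapowerMk_surjective : Function.Surjective (M.ultrapowerMk U) :=
  Quotient.mk_surjective

theorem ultrapowerMk_eq_iff {f g : ι → M.W} :
    M.ultrapowerMk U f = M.ultrapowerMk U g ↔ ∀ᶠ i in U, f i = g i :=
  Quotient.eq

theorem ultrapower_R_ultrapowerMk {f g : ι → M.W} :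
    (M.ultrapower U).R (M.ultrapowerMk U f) (M.ultrapowerMk U g) ↔ ∀ᶠ i in U, M.R (f i) (g i) :=
  Iff.rfl

/-- The modal step of Łoś's theorem, shared by `□` and `■`. -/
theorem forall_R_ultrapowerMk_iff {f : ι → M.W} {P : (M.ultrapower U).W → Prop}
    {p : ι → M.W → Prop} (hP : ∀ h, P (M.ultrapowerMk U h) ↔ ∀ᶠ i in U, p i (h i)) :
    (∀ y, (M.ultrapower U).R (M.ultrapowerMk U f) y → P y) ↔
      ∀ᶠ i in U, ∀ x, M.R (f i) x → p i x := by
  constructor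
  · intro hall
    by_contra hnot
    have hbad : ∀ᶠ i in U, ∃ x, M.R (f i) x ∧ ¬ p i x := by
      filter_upwards [Ultrafilter.eventually_not.mpr hnot] with i hi
      simpa only [not_forall, exists_prop] using hi
    obtain ⟨h, hh⟩ := hbad.choice
    have hPh := (hP h).mp (hall _ (hh.mono fun _ hi => hi.1))
    exact Ultrafilter.eventually_not.mp (hh.mono fun _ hi => hi.2) hPh
  · intro hall y hy
    obtain ⟨h, rfl⟩ := ultrapowerMk_surjective y
    exact (hP h).mpr ((hall.and hy).mono fun _ hi => hi.1 _ hi.2)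

theorem sat_ultrapowerMk (φ : LHSForm) (f g : ι → M.W) :
    (M.ultrapower U).sat (M.ultrapowerMk U f) (M.ultrapowerMk U g) φ ↔
      ∀ᶠ i in U, M.sat (f i) (g i) φ := by
  induction φ generalizing f g with
  | pl _ | pr _ => rfl
  | I => exact ultrapowerMk_eq_iff
  | neg φ ih => simp only [sat, ih, Ultrafilter.eventually_not]
  | and φ ψ ihφ ihψ => simp only [sat, ihφ, ihψ, Filter.eventually_and]
  | box φ ih => exact forall_R_ultrapowerMk_iff fun h => ih h g
  | bbox φ ih => exact forall_R_ultrapowerMk_iff fun h => ih f h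

theorem sat_constPt (φ : LHSForm) (a b : M.W) :
    (M.ultrapower U).sat (M.constPt U a) (M.constPt U b) φ ↔ M.sat a b φ :=
  (sat_ultrapowerMk φ _ _).trans Filter.eventually_const

theorem exists_R_ultrapowerMk_forall (hU : U.Incomplete) {κ : Type*} [Countable κ]
    {P : κ → (M.ultrapower U).W → Prop} {p : κ → ι → M.W → Prop}
    (hP : ∀ φ h, P φ (M.ultrapowerMk U h) ↔ ∀ᶠ i in U, p φ i (h i))
    (f : ι → M.W) (Γ : Set κ)
    (hfin : ∀ Δ : Finset κ, ↑Δ ⊆ Γ →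
      ∃ y, (M.ultrapower U).R (M.ultrapowerMk U f) y ∧ ∀ φ ∈ Δ, P φ y) :
    ∃ y, (M.ultrapower U).R (M.ultrapowerMk U f) y ∧ ∀ φ ∈ Γ, P φ y := by
  obtain ⟨enc, henc⟩ := exists_injective_nat κ
  -- the `n`-th finite approximation asks for the formulas of `Γ` with code at most `n`
  have hΔ n : {φ ∈ Γ | enc φ ≤ n}.Finite :=
    ((Set.finite_Iic n).preimage henc.injOn).subset fun _ hφ => hφ.2
  obtain ⟨h, hh⟩ := hU.exists_forall_eventually
    (P := fun n i x => M.R (f i) x ∧ ∀ φ ∈ Γ, enc φ = n → p φ i x) fun n => by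
      obtain ⟨y, hy, hyΔ⟩ := hfin (hΔ n).toFinset fun φ hφ => ((hΔ n).mem_toFinset.mp hφ).1
      obtain ⟨h, rfl⟩ := ultrapowerMk_surjective y
      have hpΔ : ∀ᶠ i in U, ∀ φ ∈ (hΔ n).toFinset, p φ i (h i) :=
        (Filter.eventually_all_finset _).mpr fun φ hφ => (hP φ h).mp (hyΔ φ hφ)
      filter_upwards [ultrapower_R_ultrapowerMk.mp hy, hpΔ] with i hRi hpi
      exact ⟨h i, fun k hk =>
        ⟨hRi, fun φ hφ hφk => hpi φ ((hΔ n).mem_toFinset.mpr ⟨hφ, hφk ▸ hk⟩)⟩⟩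
  exact ⟨M.ultrapowerMk U h, (hh 0).mono fun _ hi => hi.1,
    fun φ hφ => (hP φ h).mpr ((hh (enc φ)).mono fun _ hi => hi.2 φ hφ rfl)⟩

theorem isSaturated_ultrapower (hU : U.Incomplete) : (M.ultrapower U).IsSaturated where
  left s t := by
    obtain ⟨f, rfl⟩ := ultrapowerMk_surjective s
    obtain ⟨g, rfl⟩ := ultrapowerMk_surjective t
    exact exists_R_ultrapowerMk_forall hU (p := fun φ i x => M.sat x (g i) φ)
      (fun φ h => sat_ultrapowerMk φ h g) f
  right s t := by
    obtain ⟨f, rfl⟩ := ultrapowerMk_surjective s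
    obtain ⟨g, rfl⟩ := ultrapowerMk_surjective t
    exact exists_R_ultrapowerMk_forall hU (p := fun φ i x => M.sat (f i) x φ)
      (fun φ h => sat_ultrapowerMk φ f h) g

end Ultrapower

end LHSModel

/-- Modal equivalence between pointed LHS models can be upgraded to
bisimilarity via ultrapowers: if ⟨M,a,b⟩ and ⟨N,w,u⟩ satisfy the same LHS
formulas and U is an incomplete ultrafilter over ℕ, then the ultrapowers
⟨∏_U M,(f_a)_U,(f_b)_U⟩ and ⟨∏_U N,(f_w)_U,(f_u)_U⟩ are LHS-bisimilar. -/
theorem modal_equivalence_ultrapowers_bisimilar (M N : LHSModel)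
    (a b : M.W) (w u : N.W) (U : Ultrafilter ℕ) (hU : U.Incomplete)
    (heq : ∀ φ : LHSForm, M.sat a b φ ↔ N.sat w u φ) :
    ∃ Z : (M.ultrapower U).W × (M.ultrapower U).W →
          (N.ultrapower U).W × (N.ultrapower U).W → Prop,
      IsBisim (M.ultrapower U) (N.ultrapower U) Z ∧
      Z (M.constPt U a, M.constPt U b) (N.constPt U w, N.constPt U u) :=
  ⟨LHSModel.ModalEquiv _ _,
    LHSModel.isBisim_modalEquiv (LHSModel.isSaturated_ultrapower hU)
      (LHSModel.isSaturated_ultrapower hU),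
    fun φ => (LHSModel.sat_constPt φ a b).trans ((heq φ).trans (LHSModel.sat_constPt φ w u).symm)⟩
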